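/- Let n ≥ 1, α > 0 and p ≥ 2. Let Y be a Banach space and T : F^p_α → Y a (p,2)-summing operator. Then for every δ > 0 and every δ-lattice {z_j} in ℂⁿ with covering multiplicity at most N at radius δ, one has ∑_{j=1}^∞ ‖T(k_{z_j})‖_Y^p ≤ C·π_{p,2}(T)^p, where C depends only on n, p, α, δ, N. -/

import Mathlib

open MeasureTheory Metric ENNReal
open scoped ENNReal NNReal ComplexConjugate

noncomputable section

/-- `ℂⁿ` with the Euclidean metric and Lebesgue measure. -/
abbrev Cn (n : ℕ) := EuclideanSpace ℂ (Fin n)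

instance (n : ℕ) : MeasurableSpace (Cn n) := borel _
instance (n : ℕ) : BorelSpace (Cn n) := ⟨rfl⟩

/-- Lebesgue measure on `ℂⁿ ≅ ℝ^{2n}`, normalized by an orthonormal real basis. -/
instance (n : ℕ) : MeasureSpace (Cn n) := ⟨(stdOrthonormalBasis ℝ (Cn n)).toBasis.addHaar⟩

/-- The Hermitian pairing `⟨w,z⟩ = ∑ᵢ wᵢ · conj zᵢ`. -/
def herm {n : ℕ} (w z : Cn n) : ℂ := ∑ i, w i * conj (z i)

/-- The normalized reproducing kernel `k_z(w) = e^{α⟨w,z⟩ − α|z|²/2}` of `F²_α`. -/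
def fockKernel (n : ℕ) (α : ℝ) (z w : Cn n) : ℂ :=
  Complex.exp ((α : ℂ) * herm w z - ((α / 2 * ‖z‖ ^ 2 : ℝ) : ℂ))

/-- The weighted measure `e^{−αp|z|²/2} dv(z)`, so that `L^p_α = L^p` of this measure. -/
def wMeasure (n : ℕ) (p α : ℝ) : Measure (Cn n) :=
  (volume : Measure (Cn n)).withDensity fun z =>
    ENNReal.ofReal (Real.exp (-(α * p / 2) * ‖z‖ ^ 2))

/-- The `L^p_α`-norm `(∫ |f|^p e^{−αp|z|²/2} dv)^{1/p}`, valued in `ℝ≥0∞`. -/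
def eNormLpα (n : ℕ) (p α : ℝ) (f : Cn n → ℂ) : ℝ≥0∞ :=
  (∫⁻ z, ENNReal.ofReal (‖f z‖ ^ p * Real.exp (-(α * p / 2) * ‖z‖ ^ 2))) ^ (1 / p)

/-- The Bergman projection `P f(z) = ∫ e^{α⟨z,w⟩} f(w) e^{−α|w|²} dv(w)`. -/
def bergmanProj (n : ℕ) (α : ℝ) (f : Cn n → ℂ) (z : Cn n) : ℂ :=
  ∫ w, Complex.exp ((α : ℂ) * herm z w) * f w * ((Real.exp (-α * ‖w‖ ^ 2) : ℝ) : ℂ)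

/-- The Hankel operator `H_f g = f g − P(fg)`, as a function. -/
def hankel (n : ℕ) (α : ℝ) (f g : Cn n → ℂ) : Cn n → ℂ :=
  fun z => f z * g z - bergmanProj n α (fun w => f w * g w) z

/-- The symbol class `𝒮`: `f·k_z ∈ ⋃_{q ≥ 1} L^q_α` for every `z`. -/
def symbolClass (n : ℕ) (α : ℝ) (f : Cn n → ℂ) : Prop :=
  ∀ z : Cn n, ∃ q : ℝ, 1 ≤ q ∧
    MemLp (fun w => f w * fockKernel n α z w) (ENNReal.ofReal q) (wMeasure n q α)

/-- `G_{p,ρ}(f)(z)`: the distance of `f` to holomorphic functions in the normalized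
`L^p`-metric of the ball `B(z,ρ)`. -/
def Gfun (n : ℕ) (p ρ : ℝ) (f : Cn n → ℂ) (z : Cn n) : ℝ :=
  ⨅ h : {h : Cn n → ℂ // DifferentiableOn ℂ h (ball z ρ)},
    (((∫⁻ w in ball z ρ, ENNReal.ofReal (‖f w - h.1 w‖ ^ p)) /
        volume (ball z ρ)).toReal) ^ (1 / p)

/-- Membership in `IDA^{s,p}`. -/
def memIDA (n : ℕ) (s p : ℝ) (f : Cn n → ℂ) : Prop :=
  LocallyIntegrable (fun z => ‖f z‖ ^ p) (volume : Measure (Cn n)) ∧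
    (∫⁻ z, ENNReal.ofReal (Gfun n p 1 f z ^ s)) < ∞

/-- The `IDA^{s,p}`-norm `(∫ G_p(f)^s dv)^{1/s}`. -/
def idaNorm (n : ℕ) (s p : ℝ) (f : Cn n → ℂ) : ℝ :=
  ((∫⁻ z, ENNReal.ofReal (Gfun n p 1 f z ^ s)).toReal) ^ (1 / s)

/-- The exponent `κ = κ(p,r)` of the main theorem. -/
def kappaPR (p r : ℝ) : ℝ :=
  if p ≤ 2 then 2
  else if r ≤ p / (p - 1) then p / (p - 1)
  else if r ≤ p then r
  else p

/-- `T : X → Y` is `(q,r)`-summing with constant `C`: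
`(∑ₖ ‖T xₖ‖^q)^{1/q} ≤ C · sup_{‖x*‖ ≤ 1} (∑ₖ |x*(xₖ)|^r)^{1/r}`
for all finite sequences. -/
def IsSummingWith {X Y : Type*} [NormedAddCommGroup X] [NormedSpace ℂ X]
    [NormedAddCommGroup Y] (q r : ℝ) (T : X → Y) (C : ℝ) : Prop :=
  ∀ (m : ℕ) (x : Fin m → X) (D : ℝ),
    (∀ φ : X →L[ℂ] ℂ, ‖φ‖ ≤ 1 → (∑ k, ‖φ (x k)‖ ^ r) ^ (1 / r) ≤ D) →
    (∑ k, ‖T (x k)‖ ^ q) ^ (1 / q) ≤ C * D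

instance factOneLeOfReal (p : ℝ) [hp : Fact ((1 : ℝ) ≤ p)] :
    Fact ((1 : ℝ≥0∞) ≤ ENNReal.ofReal p) :=
  ⟨by simpa using ENNReal.one_le_ofReal.mpr hp.out⟩

instance factOneLeOneReal : Fact ((1 : ℝ) ≤ (1 : ℝ)) := ⟨le_refl _⟩

/-- The Fock space `F^p_α` as a submodule of `L^p_α`: the a.e. classes having an
entire representative. -/
def FockSubmodule (n : ℕ) (p α : ℝ) :
    Submodule ℂ (Lp ℂ (ENNReal.ofReal p) (wMeasure n p α)) where
  carrier := {f | ∃ g : Cn n → ℂ, Differentiable ℂ g ∧ (f : Cn n → ℂ) =ᵐ[wMeasure n p α] g}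
  add_mem' := by
    rintro f₁ f₂ ⟨g₁, hg₁, he₁⟩ ⟨g₂, hg₂, he₂⟩
    exact ⟨g₁ + g₂, hg₁.add hg₂, (Lp.coeFn_add f₁ f₂).trans (he₁.add he₂)⟩
  zero_mem' := ⟨0, differentiable_const 0, Lp.coeFn_zero ℂ _ _⟩
  smul_mem' := by
    rintro c f ⟨g, hg, he⟩
    exact ⟨c • g, hg.const_smul c, (Lp.coeFn_smul c f).trans (he.const_smul c)⟩

/-- The Fock space `F^p_α`, as a normed space. -/
abbrev FockSpace (n : ℕ) (p α : ℝ) := ↥(FockSubmodule n p α)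

/-- A continuous linear operator `T : F^p_α → L^p_α` extends the Hankel operator `H_f`
(which is densely defined on the span of the normalized reproducing kernels). -/
def ExtendsHankel (n : ℕ) (p α : ℝ) [Fact ((1 : ℝ) ≤ p)] (f : Cn n → ℂ)
    (T : FockSpace n p α →L[ℂ] Lp ℂ (ENNReal.ofReal p) (wMeasure n p α)) : Prop :=
  ∀ (z : Cn n) (g : FockSpace n p α),
    ((g : Lp ℂ (ENNReal.ofReal p) (wMeasure n p α)) : Cn n → ℂ)
        =ᵐ[wMeasure n p α] fockKernel n α z →
    ((T g : Lp ℂ (ENNReal.ofReal p) (wMeasure n p α)) : Cn n → ℂ)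
        =ᵐ[wMeasure n p α] hankel n α f (fockKernel n α z)

/-- The measure defining `L^p_α(dμ)`, namely `e^{−αp|z|²/2} dμ(z)`. -/
def wMeasureμ (n : ℕ) (p α : ℝ) (μ : Measure (Cn n)) : Measure (Cn n) :=
  μ.withDensity fun z => ENNReal.ofReal (Real.exp (-(α * p / 2) * ‖z‖ ^ 2))

/-- A continuous linear operator `T : F^p_α → L^p_α(dμ)` is the identity embedding:
it sends each element of the Fock space to (the `L^p(dμ)`-class of) its entire
representative. -/
def IsEmbeddingInto (n : ℕ) (p α : ℝ) [Fact ((1 : ℝ) ≤ p)] (μ : Measure (Cn n))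
    (T : FockSpace n p α →L[ℂ] Lp ℂ (ENNReal.ofReal p) (wMeasureμ n p α μ)) : Prop :=
  ∀ (g : FockSpace n p α) (G : Cn n → ℂ), Differentiable ℂ G →
    ((g : Lp ℂ (ENNReal.ofReal p) (wMeasure n p α)) : Cn n → ℂ) =ᵐ[wMeasure n p α] G →
    ((T g : Lp ℂ (ENNReal.ofReal p) (wMeasureμ n p α μ)) : Cn n → ℂ) =ᵐ[wMeasureμ n p α μ] G

/-- `{z_j}` is a `δ`-lattice: the balls `B(z_j, δ)` cover `ℂⁿ` and the balls
`B(z_j, bδ)` are pairwise disjoint for some `b > 0`. -/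
def IsLattice (n : ℕ) (δ : ℝ) (zs : ℕ → Cn n) : Prop :=
  (∀ w : Cn n, ∃ j, w ∈ ball (zs j) δ) ∧
    ∃ b : ℝ, 0 < b ∧ Pairwise fun i j => Disjoint (ball (zs i) (b * δ)) (ball (zs j) (b * δ))

/-- Every point of `ℂⁿ` lies in at most `N` of the balls `B(z_j, ρ)`. -/
def CoverMult (n : ℕ) (ρ : ℝ) (zs : ℕ → Cn n) (N : ℕ) : Prop :=
  ∀ w : Cn n, Set.Finite {j | w ∈ ball (zs j) ρ} ∧ Set.ncard {j | w ∈ ball (zs j) ρ} ≤ N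

/-- The averaged function `μ̂_δ(z) = μ(B(z,δ))/|B(z,δ)|`, valued in `ℝ≥0∞`. -/
def avgE (n : ℕ) (μ : Measure (Cn n)) (δ : ℝ) (z : Cn n) : ℝ≥0∞ :=
  μ (ball z δ) / volume (ball z δ)

/-- The `t`-Berezin transform `μ̃_t(z) = ∫ |k_z(w)|^t e^{−αt|w|²/2} dμ(w)`, valued in `ℝ≥0∞`. -/
def berezinE (n : ℕ) (α t : ℝ) (μ : Measure (Cn n)) (z : Cn n) : ℝ≥0∞ :=
  ∫⁻ w, ENNReal.ofReal (‖fockKernel n α z w‖ ^ t * Real.exp (-(α * t / 2) * ‖w‖ ^ 2)) ∂μ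

end

/-! The normalized kernels of a separated lattice form a weakly `ℓ²` family in `F^p_α`.
Indeed `|k_z(w)| e^{-α|w|²/2} = e^{-α|w-z|²/2}`, the lattice sums `∑_j e^{-α|w-z_j|²/2}` are
bounded uniformly in `w` (compare each term with a Gaussian average over the disjoint balls
`B(z_j, bδ)`), so Cauchy–Schwarz and `p ≥ 2` give `‖∑ c_j k_{z_j}‖^p ≤ S^{p/2} ∫ e^{-α|w|²/2}`
for every unit vector `c ∈ ℓ²`. By duality `(∑_j |φ(k_{z_j})|²)^{1/2}` obeys the same bound for
`‖φ‖ ≤ 1`, and the `(p,2)`-summing inequality on finite sections bounds `∑_j ‖T k_{z_j}‖^p`. -/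

open Real

lemma exp_neg_mul_sq_norm_sub_le {V : Type*} [SeminormedAddCommGroup V] {c ρ : ℝ} (hc : 0 ≤ c)
    {w z u : V} (hu : u ∈ ball z ρ) :
    rexp (-c * ‖w - z‖ ^ 2) ≤ rexp (c * ρ ^ 2) * rexp (-(c / 2) * ‖u - w‖ ^ 2) := by
  rw [← Real.exp_add, Real.exp_le_exp]
  have hu' : ‖u - w‖ ≤ ‖w - z‖ + ρ := by
    rw [← dist_eq_norm, ← dist_eq_norm, dist_comm w]
    linarith [dist_triangle u z w, mem_ball.mp hu]
  nlinarith [mul_le_mul_of_nonneg_left (pow_le_pow_left₀ (norm_nonneg _) hu' 2) hc,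
    mul_nonneg hc (sq_nonneg (‖w - z‖ - ρ))]

section GaussianLatticeSum

variable {V : Type*} [NormedAddCommGroup V] [InnerProductSpace ℝ V] [FiniteDimensional ℝ V]
  [MeasurableSpace V] [BorelSpace V]

lemma integrable_exp_neg_mul_sq_norm_sub {c : ℝ} (hc : 0 < c) (z : V) :
    Integrable fun w : V => rexp (-c * ‖w - z‖ ^ 2) := by
  have h := (GaussianFourier.integrable_cexp_neg_mul_sq_norm_add (V := V) (b := c)
    (by simpa using hc) 0 0).norm.comp_sub_right z
  refine h.congr (.of_forall fun w => ?_)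
  simp [Complex.norm_exp, ← Complex.ofReal_pow]

theorem exists_forall_sum_exp_neg_mul_sq_norm_sub_le {ι : Type*} {c ρ : ℝ} (hc : 0 < c)
    (hρ : 0 < ρ) {z : ι → V} (hz : Pairwise fun i j => Disjoint (ball (z i) ρ) (ball (z j) ρ)) :
    ∃ S, 0 ≤ S ∧ ∀ (s : Finset ι) (w : V), ∑ j ∈ s, rexp (-c * ‖w - z j‖ ^ 2) ≤ S := by
  set vol := volume.real (ball (0 : V) ρ)
  have hvol : 0 < vol :=
    ENNReal.toReal_pos (measure_ball_pos _ _ hρ).ne' measure_ball_lt_top.ne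
  set I := ∫ u : V, rexp (-(c / 2) * ‖u‖ ^ 2)
  have hI : 0 ≤ I := integral_nonneg fun _ => (exp_pos _).le
  refine ⟨rexp (c * ρ ^ 2) * I / vol, by positivity, fun s w => ?_⟩
  set G : V → ℝ := fun u => rexp (c * ρ ^ 2) * rexp (-(c / 2) * ‖u - w‖ ^ 2)
  have hG : Integrable G := (integrable_exp_neg_mul_sq_norm_sub (half_pos hc) w).const_mul _
  have hball : ∀ j, rexp (-c * ‖w - z j‖ ^ 2) * vol ≤ ∫ u in ball (z j) ρ, G u := fun j => by
    have hvol_j : volume.real (ball (z j) ρ) = vol := by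
      simp only [vol, measureReal_def, Measure.addHaar_ball_center]
    rw [← hvol_j]
    exact setIntegral_ge_of_const_le_real measurableSet_ball measure_ball_lt_top.ne
      (fun u hu => exp_neg_mul_sq_norm_sub_le hc.le hu) hG.integrableOn
  rw [le_div_iff₀ hvol, Finset.sum_mul]
  calc ∑ j ∈ s, rexp (-c * ‖w - z j‖ ^ 2) * vol
      ≤ ∑ j ∈ s, ∫ u in ball (z j) ρ, G u := Finset.sum_le_sum fun j _ => hball j
    _ = ∫ u in ⋃ j ∈ s, ball (z j) ρ, G u :=
        (integral_biUnion_finset s (fun _ _ => measurableSet_ball)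
          (fun _ _ _ _ hij => hz hij) fun _ _ => hG.integrableOn).symm
    _ ≤ ∫ u, G u := setIntegral_le_integral hG (.of_forall fun _ => by positivity)
    _ = rexp (c * ρ ^ 2) * I := by
        rw [integral_const_mul, integral_sub_right_eq_self (fun u => rexp (-(c / 2) * ‖u‖ ^ 2))]

end GaussianLatticeSum

lemma rpow_sum_mul_le_rpow_mul_sum_sq_mul {ι : Type*} (s : Finset ι) {p S : ℝ} (hp : 2 ≤ p)
    {b a : ι → ℝ} (hb : ∀ k ∈ s, 0 ≤ b k) (ha₀ : ∀ k ∈ s, 0 ≤ a k) (ha₁ : ∀ k ∈ s, a k ≤ 1)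
    (hb₁ : ∑ k ∈ s, b k ^ 2 ≤ 1) (haS : ∑ k ∈ s, a k ≤ S) :
    (∑ k ∈ s, b k * a k) ^ p ≤ S ^ (p / 2) * ∑ k ∈ s, b k ^ 2 * a k := by
  set T := ∑ k ∈ s, b k ^ 2 * a k
  have hT₀ : 0 ≤ T := Finset.sum_nonneg fun k hk => mul_nonneg (sq_nonneg _) (ha₀ k hk)
  have hT₁ : T ≤ 1 :=
    (Finset.sum_le_sum fun k hk => mul_le_of_le_one_right (sq_nonneg _) (ha₁ k hk)).trans hb₁
  have hS₀ : 0 ≤ S := (Finset.sum_nonneg ha₀).trans haS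
  have hX₀ : 0 ≤ ∑ k ∈ s, b k * a k := Finset.sum_nonneg fun k hk => mul_nonneg (hb k hk) (ha₀ k hk)
  have hCS : (∑ k ∈ s, b k * a k) ^ 2 ≤ T * S :=
    (Finset.sum_sq_le_sum_mul_sum_of_sq_le_mul s
      (fun k hk => mul_nonneg (sq_nonneg _) (ha₀ k hk)) ha₀ fun k _ => le_of_eq (by ring)).trans
      (mul_le_mul_of_nonneg_left haS hT₀)
  calc (∑ k ∈ s, b k * a k) ^ p = ((∑ k ∈ s, b k * a k) ^ 2) ^ (p / 2) := by
        rw [← Real.rpow_natCast, ← Real.rpow_mul hX₀]; congr 1; ring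
    _ ≤ (T * S) ^ (p / 2) := by gcongr
    _ = T ^ (p / 2) * S ^ (p / 2) := Real.mul_rpow hT₀ hS₀
    _ ≤ T * S ^ (p / 2) := by gcongr; exact Real.rpow_le_self_of_le_one hT₀ hT₁ (by linarith)
    _ = S ^ (p / 2) * T := mul_comm _ _

lemma MeasureTheory.Lp.norm_le_of_ae_eq_of_lintegral_le {α E : Type*} [MeasurableSpace α]
    [NormedAddCommGroup E] {μ : Measure α} {p : ℝ} (hp : 0 < p)
    {f : Lp E (ENNReal.ofReal p) μ} {F : α → E} (hf : f =ᵐ[μ] F) {M : ℝ} (hM : 0 ≤ M)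
    (h : ∫⁻ a, ‖F a‖ₑ ^ p ∂μ ≤ ENNReal.ofReal M) : ‖f‖ ≤ M ^ (1 / p) := by
  rw [Lp.norm_def, eLpNorm_congr_ae hf, eLpNorm_eq_lintegral_rpow_enorm_toReal
    (by simpa using hp) ofReal_ne_top, toReal_ofReal hp.le]
  refine toReal_le_of_le_ofReal (by positivity) ?_
  rw [← ofReal_rpow_of_nonneg hM (by positivity)]
  gcongr

theorem ContinuousLinearMap.sqrt_sum_norm_apply_sq_le {𝕜 X ι : Type*} [RCLike 𝕜]
    [NormedAddCommGroup X] [NormedSpace 𝕜 X] [Fintype ι] {x : ι → X} {B : ℝ}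
    (hB : ∀ c : ι → 𝕜, ∑ k, ‖c k‖ ^ 2 ≤ 1 → ‖∑ k, c k • x k‖ ≤ B) (φ : X →L[𝕜] 𝕜) :
    √(∑ k, ‖φ (x k)‖ ^ 2) ≤ ‖φ‖ * B := by
  set s := ∑ k, ‖φ (x k)‖ ^ 2
  have hs : 0 ≤ s := Finset.sum_nonneg fun _ _ => sq_nonneg _
  have hB₀ : 0 ≤ B := (norm_nonneg _).trans (hB 0 (by simp))
  rcases (sqrt_nonneg s).eq_or_lt with h₀ | hpos
  · rw [← h₀]; positivity
  -- test `φ` against the unit vector `c` proportional to `conj (φ (x k))`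
  set c : ι → 𝕜 := fun k => conj (φ (x k)) / (√s : 𝕜)
  have hc : ∑ k, ‖c k‖ ^ 2 = 1 := by
    simp only [c, norm_div, RCLike.norm_conj, RCLike.norm_ofReal, abs_of_nonneg (sqrt_nonneg s),
      div_pow, sq_sqrt hs, ← Finset.sum_div]
    exact div_self (sqrt_pos.mp hpos).ne'
  have hφ : φ (∑ k, c k • x k) = (√s : 𝕜) := by
    simp only [c, map_sum, map_smul, smul_eq_mul, div_mul_eq_mul_div, RCLike.conj_mul,
      ← Finset.sum_div]
    rw [div_eq_iff (by exact_mod_cast hpos.ne'), ← RCLike.ofReal_mul, mul_self_sqrt hs]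
    push_cast [s]
    rfl
  calc √s = ‖φ (∑ k, c k • x k)‖ := by rw [hφ, RCLike.norm_ofReal, abs_of_nonneg hpos.le]
    _ ≤ ‖φ‖ * ‖∑ k, c k • x k‖ := φ.le_opNorm _
    _ ≤ ‖φ‖ * B := by gcongr; exact hB c hc.le

theorem IsSummingWith.sum_rpow_le {X Y : Type*} [NormedAddCommGroup X] [NormedSpace ℂ X]
    [NormedAddCommGroup Y] {q r C D : ℝ} {T : X → Y} (hT : IsSummingWith q r T C) (hq : 0 < q)
    {m : ℕ} (x : Fin m → X)
    (hx : ∀ φ : X →L[ℂ] ℂ, ‖φ‖ ≤ 1 → (∑ k, ‖φ (x k)‖ ^ r) ^ (1 / r) ≤ D) :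
    ∑ k, ‖T (x k)‖ ^ q ≤ (C * D) ^ q := by
  have h₀ : 0 ≤ ∑ k, ‖T (x k)‖ ^ q := Finset.sum_nonneg fun _ _ => by positivity
  calc ∑ k, ‖T (x k)‖ ^ q = ((∑ k, ‖T (x k)‖ ^ q) ^ (1 / q)) ^ q := by
        rw [← Real.rpow_mul h₀, one_div_mul_cancel hq.ne', Real.rpow_one]
    _ ≤ (C * D) ^ q := Real.rpow_le_rpow (by positivity) (hT m x D hx) hq.le

section FockKernel

variable {n : ℕ}

lemma herm_eq_inner (w z : Cn n) : herm w z = inner ℂ z w :=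
  Finset.sum_congr rfl fun i _ => by rw [RCLike.inner_apply, mul_comm]

lemma norm_fockKernel_mul_exp (α : ℝ) (z w : Cn n) :
    ‖fockKernel n α z w‖ * rexp (-(α / 2) * ‖w‖ ^ 2) = rexp (-(α / 2) * ‖w - z‖ ^ 2) := by
  have hre : (herm w z).re = (inner ℂ w z : ℂ).re := by
    rw [herm_eq_inner, ← inner_conj_symm, Complex.conj_re]
  have hnorm : ‖w - z‖ ^ 2 = ‖w‖ ^ 2 - 2 * (inner ℂ w z : ℂ).re + ‖z‖ ^ 2 := by
    simpa using norm_sub_sq (𝕜 := ℂ) w z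
  rw [fockKernel, Complex.norm_exp, ← Real.exp_add, Complex.sub_re, Complex.ofReal_re,
    Complex.re_ofReal_mul, hre, hnorm]
  ring_nf

lemma exp_mul_norm_sum_mul_fockKernel_rpow_le {ι : Type*} [Fintype ι] {α p S : ℝ} (hα : 0 ≤ α)
    (hp : 2 ≤ p) {z : ι → Cn n} (hS : ∀ w, ∑ k, rexp (-(α / 2) * ‖w - z k‖ ^ 2) ≤ S)
    {c : ι → ℂ} (hc : ∑ k, ‖c k‖ ^ 2 ≤ 1) (w : Cn n) :
    rexp (-(α * p / 2) * ‖w‖ ^ 2) * ‖∑ k, c k * fockKernel n α (z k) w‖ ^ p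
      ≤ S ^ (p / 2) * ∑ k, ‖c k‖ ^ 2 * rexp (-(α / 2) * ‖w - z k‖ ^ 2) := by
  have hexp : rexp (-(α * p / 2) * ‖w‖ ^ 2) = rexp (-(α / 2) * ‖w‖ ^ 2) ^ p := by
    rw [← Real.exp_mul]; ring_nf
  calc rexp (-(α * p / 2) * ‖w‖ ^ 2) * ‖∑ k, c k * fockKernel n α (z k) w‖ ^ p
      = (‖∑ k, c k * fockKernel n α (z k) w‖ * rexp (-(α / 2) * ‖w‖ ^ 2)) ^ p := by
        rw [hexp, Real.mul_rpow (norm_nonneg _) (exp_pos _).le, mul_comm]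
    _ ≤ (∑ k, ‖c k‖ * rexp (-(α / 2) * ‖w - z k‖ ^ 2)) ^ p := by
        gcongr
        calc ‖∑ k, c k * fockKernel n α (z k) w‖ * rexp (-(α / 2) * ‖w‖ ^ 2)
            ≤ (∑ k, ‖c k‖ * ‖fockKernel n α (z k) w‖) * rexp (-(α / 2) * ‖w‖ ^ 2) := by
              gcongr
              exact (norm_sum_le _ _).trans_eq (by simp only [norm_mul])
          _ = ∑ k, ‖c k‖ * rexp (-(α / 2) * ‖w - z k‖ ^ 2) := by
              simp only [Finset.sum_mul, mul_assoc, norm_fockKernel_mul_exp]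
    _ ≤ S ^ (p / 2) * ∑ k, ‖c k‖ ^ 2 * rexp (-(α / 2) * ‖w - z k‖ ^ 2) :=
        rpow_sum_mul_le_rpow_mul_sum_sq_mul _ hp (fun _ _ => norm_nonneg _)
          (fun _ _ => (exp_pos _).le)
          (fun _ _ => exp_le_one_iff.mpr
            (mul_nonpos_of_nonpos_of_nonneg (by linarith) (sq_nonneg _)))
          hc (hS w)

theorem norm_sum_smul_le_of_ae_eq_fockKernel {ι : Type*} [Fintype ι] {α p S : ℝ} (hα : 0 < α)
    [Fact (1 ≤ p)] (hp : 2 ≤ p) {z : ι → Cn n}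
    (hS : ∀ w, ∑ k, rexp (-(α / 2) * ‖w - z k‖ ^ 2) ≤ S) (hS₀ : 0 ≤ S)
    {g : ι → FockSpace n p α}
    (hg : ∀ k, ((g k : Lp ℂ (ENNReal.ofReal p) (wMeasure n p α)) : Cn n → ℂ)
      =ᵐ[wMeasure n p α] fockKernel n α (z k))
    {c : ι → ℂ} (hc : ∑ k, ‖c k‖ ^ 2 ≤ 1) :
    ‖∑ k, c k • g k‖ ≤ (S ^ (p / 2) * ∫ w : Cn n, rexp (-(α / 2) * ‖w‖ ^ 2)) ^ (1 / p) := by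
  set F : Cn n → ℂ := fun w => ∑ k, c k * fockKernel n α (z k) w
  have hF : (((∑ k, c k • g k : FockSpace n p α) : Lp ℂ (ENNReal.ofReal p) (wMeasure n p α)) :
      Cn n → ℂ) =ᵐ[wMeasure n p α] F := by
    simp only [Submodule.coe_sum, Submodule.coe_smul]
    filter_upwards [Lp.coeFn_fun_finsetSum Finset.univ fun k =>
        c k • (g k : Lp ℂ (ENNReal.ofReal p) (wMeasure n p α)),
      ae_all_iff.mpr fun k => Lp.coeFn_smul (c k) (g k : Lp ℂ (ENNReal.ofReal p) (wMeasure n p α)),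
      ae_all_iff.mpr hg]
      with w hsum hsmul hk
    simp only [hsum, F, hsmul, Pi.smul_apply, hk, smul_eq_mul]
  have ha : ∀ k, Integrable fun w => rexp (-(α / 2) * ‖w - z k‖ ^ 2) :=
    fun k => integrable_exp_neg_mul_sq_norm_sub (half_pos hα) (z k)
  have hI : 0 ≤ ∫ w : Cn n, rexp (-(α / 2) * ‖w‖ ^ 2) := integral_nonneg fun _ => (exp_pos _).le
  refine Lp.norm_le_of_ae_eq_of_lintegral_le (by linarith) hF (by positivity) ?_
  calc ∫⁻ w, ‖F w‖ₑ ^ p ∂wMeasure n p α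
      ≤ ∫⁻ w, ENNReal.ofReal (rexp (-(α * p / 2) * ‖w‖ ^ 2)) * ‖F w‖ₑ ^ p :=
        lintegral_withDensity_le_lintegral_mul _ (by fun_prop) _
    _ ≤ ∫⁻ w, ENNReal.ofReal
          (S ^ (p / 2) * ∑ k, ‖c k‖ ^ 2 * rexp (-(α / 2) * ‖w - z k‖ ^ 2)) := by
        refine lintegral_mono fun w => ?_
        rw [← ofReal_norm, ofReal_rpow_of_nonneg (norm_nonneg _) (by linarith),
          ← ENNReal.ofReal_mul (exp_pos _).le]
        exact ENNReal.ofReal_le_ofReal (exp_mul_norm_sum_mul_fockKernel_rpow_le hα.le hp hS hc w)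
    _ = ENNReal.ofReal
          (∫ w, S ^ (p / 2) * ∑ k, ‖c k‖ ^ 2 * rexp (-(α / 2) * ‖w - z k‖ ^ 2)) :=
        (ofReal_integral_eq_lintegral_ofReal
          ((integrable_finsetSum _ fun k _ => (ha k).const_mul _).const_mul _)
          (.of_forall fun _ => by positivity)).symm
    _ ≤ ENNReal.ofReal (S ^ (p / 2) * ∫ w : Cn n, rexp (-(α / 2) * ‖w‖ ^ 2)) := by
        refine ENNReal.ofReal_le_ofReal ?_
        simp only [integral_const_mul, integral_finsetSum _ fun k _ => (ha k).const_mul _,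
          integral_sub_right_eq_self (fun w : Cn n => rexp (-(α / 2) * ‖w‖ ^ 2)),
          ← Finset.sum_mul]
        gcongr
        exact mul_le_of_le_one_left hI hc

end FockKernel

theorem p2_summing_kernel_sum_bound_general (n : ℕ) (α p : ℝ) (hα : 0 < α)
    [hp : Fact ((1 : ℝ) ≤ p)] (hp2 : 2 ≤ p) (δ : ℝ) (hδ : 0 < δ)
    (zs : ℕ → Cn n) (hlat : IsLattice n δ zs) :
    ∃ C : ℝ, 0 < C ∧
      ∀ (Y : Type u) [NormedAddCommGroup Y] [NormedSpace ℂ Y] [CompleteSpace Y]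
        (T : FockSpace n p α →L[ℂ] Y) (C₀ : ℝ), 0 ≤ C₀ → IsSummingWith p 2 T C₀ →
        ∀ g : ℕ → FockSpace n p α,
          (∀ j, ((g j : Lp ℂ (ENNReal.ofReal p) (wMeasure n p α)) : Cn n → ℂ)
              =ᵐ[wMeasure n p α] fockKernel n α (zs j)) →
          ∑' j, ENNReal.ofReal (‖T (g j)‖ ^ p) ≤ ENNReal.ofReal (C * C₀ ^ p) := by
  obtain ⟨-, b, hb, hdisj⟩ := hlat
  obtain ⟨S, hS₀, hS⟩ :=
    exists_forall_sum_exp_neg_mul_sq_norm_sub_le (half_pos hα) (mul_pos hb hδ) hdisj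
  set M := S ^ (p / 2) * ∫ w : Cn n, rexp (-(α / 2) * ‖w‖ ^ 2)
  have hM : 0 ≤ M := mul_nonneg (by positivity) (integral_nonneg fun _ => (exp_pos _).le)
  refine ⟨M + 1, by positivity, fun Y _ _ _ T C₀ hC₀ hT g hg =>
    ENNReal.tsum_le_of_sum_range_le fun m => ?_⟩
  have hweak : ∀ φ : FockSpace n p α →L[ℂ] ℂ, ‖φ‖ ≤ 1 →
      (∑ k : Fin m, ‖φ (g k)‖ ^ (2 : ℝ)) ^ (1 / (2 : ℝ)) ≤ M ^ (1 / p) := fun φ hφ => by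
    simp only [Real.rpow_two, ← Real.sqrt_eq_rpow]
    refine (φ.sqrt_sum_norm_apply_sq_le fun c hc => ?_).trans
      (mul_le_of_le_one_left (by positivity) hφ)
    exact norm_sum_smul_le_of_ae_eq_fockKernel hα hp2
      (fun w => (Fin.sum_univ_eq_sum_range _ m).trans_le (hS _ w)) hS₀ (fun k => hg k) hc
  rw [← ENNReal.ofReal_sum_of_nonneg fun _ _ => by positivity,
    ← Fin.sum_univ_eq_sum_range (fun j => ‖T (g j)‖ ^ p)]
  refine ENNReal.ofReal_le_ofReal ((hT.sum_rpow_le (by linarith) _ hweak).trans ?_)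
  rw [Real.mul_rpow hC₀ (by positivity), ← Real.rpow_mul hM, one_div_mul_cancel (by linarith),
    Real.rpow_one]
  nlinarith [Real.rpow_nonneg hC₀ p]

/-- **Case 3 estimate in Theorem 3.3.** Let `p ≥ 2` and let `{z_j}` be a `δ`-lattice with
covering multiplicity at most `N` at radius `δ`. Then there is `C > 0` (depending only on
`n, p, α, δ, N`) such that every `(p,2)`-summing operator `T : F^p_α → Y` into a Banach
space `Y` satisfies `∑_j ‖T(k_{z_j})‖^p ≤ C π_{p,2}(T)^p`. -/
theorem p2_summing_kernel_sum_bound (n : ℕ) (hn : 1 ≤ n) (α p : ℝ) (hα : 0 < α)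
    [hp : Fact ((1 : ℝ) ≤ p)] (hp2 : 2 ≤ p) (δ : ℝ) (hδ : 0 < δ)
    (N : ℕ) (zs : ℕ → Cn n) (hlat : IsLattice n δ zs) (hN : CoverMult n δ zs N) :
    ∃ C : ℝ, 0 < C ∧
      ∀ (Y : Type u) [NormedAddCommGroup Y] [NormedSpace ℂ Y] [CompleteSpace Y]
        (T : FockSpace n p α →L[ℂ] Y) (C₀ : ℝ), 0 ≤ C₀ → IsSummingWith p 2 T C₀ →
        ∀ g : ℕ → FockSpace n p α,
          (∀ j, ((g j : Lp ℂ (ENNReal.ofReal p) (wMeasure n p α)) : Cn n → ℂ)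
              =ᵐ[wMeasure n p α] fockKernel n α (zs j)) →
          ∑' j, ENNReal.ofReal (‖T (g j)‖ ^ p) ≤ ENNReal.ofReal (C * C₀ ^ p) :=
  p2_summing_kernel_sum_bound_general n α p hα (hp := hp) hp2 δ hδ zs hlat
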